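/- arXiv:2011.04185 — 4 statements merged into one kernel-verified Lean document; each statement's English description precedes it below -/
import Mathlib

section
/- Let μ be a probability measure on a measurable space S, let R: S → ℝ be measurable and bounded with essential infimum R_min under μ, and let c ∈ (0,1). Then the infimum of ∫ W·R dμ over all measurable W: S → [0,∞) with ∫ W dμ = 1 and ∫ |W − 1|/2 dμ ≤ c equals c·R_min + (1−c)·sup_{β ∈ ℝ} { β − (1/(1−c))·∫ max(0, β − R(s)) dμ(s) }. -/
/-!
Split a feasible `W` as `min W 1 + (W - 1)⁺`: the first part keeps mass `1 - t` of `μ` and the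
second moves mass `t` elsewhere, where `t = ∫ |W - 1| / 2 ≤ c`. For `0 ≤ m ≤ 1` one has
`m * R ≥ m * β - (β - R)⁺` pointwise, and the moved mass sits where `R ≥ R_min` a.e.; together
these bound `∫ W * R` below by `c * R_min + (1 - c) * β - ∫ (β - R)⁺` for every `β`.

Conversely, keep `μ` below an approximate `(1 - c)`-quantile `β` of `R` (exactly below `β - η`,
partially on `(β - η, β]`) and put the remaining mass `c` uniformly on `{R < R_min + δ}`, which is
not null by definition of the essential infimum. This feasible `W` attains the bound at `β` up to
`c * δ + η`.
-/

open MeasureTheory Filter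

lemma mul_sub_max_zero_sub_le_mul {m β x : ℝ} (h0 : 0 ≤ m) (h1 : m ≤ 1) :
    m * β - max 0 (β - x) ≤ m * x := by
  rcases le_total β x with h | h
  · nlinarith [le_max_left 0 (β - x)]
  · rw [max_eq_right (sub_nonneg.2 h)]
    nlinarith

lemma Monotone.exists_sub_lt_le {G : ℝ → ℝ} (hG : Monotone G) {q x y η : ℝ} (hx : G x < q)
    (hy : q ≤ G y) (hη : 0 < η) : ∃ β, G (β - η) < q ∧ q ≤ G β := by
  have hA : BddBelow {z | q ≤ G z} :=
    ⟨x, fun z hz => le_of_not_gt fun hzx => (hx.trans_le hz).not_ge (hG hzx.le)⟩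
  obtain ⟨β, hβA, hβ⟩ :=
    exists_lt_of_csInf_lt ⟨y, hy⟩ (lt_add_of_pos_right (sInf {z | q ≤ G z}) hη)
  exact ⟨β, not_le.1 (notMem_of_lt_csInf (x := β - η) (by linarith) hA), hβA⟩

lemma measure_lt_ne_zero_of_essInf_lt {S : Type*} [MeasurableSpace S] {μ : Measure S}
    {f : S → ℝ} (hf : IsCoboundedUnder (· ≥ ·) (ae μ) f) {x : ℝ} (hx : essInf f μ < x) :
    μ {s | f s < x} ≠ 0 := by
  intro h
  have : x ≤ essInf f μ :=
    le_essInf_of_ae_le x ((measure_eq_zero_iff_ae_notMem.1 h).mono fun s hs => not_lt.1 hs) hf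
  linarith

lemma one_sub_mul_iSup_sub_one_div_mul {c : ℝ} (hc1 : c < 1) (f : ℝ → ℝ) :
    (1 - c) * (⨆ β : ℝ, (β - (1 / (1 - c)) * f β)) = ⨆ β : ℝ, ((1 - c) * β - f β) := by
  have hc : 0 < 1 - c := sub_pos.2 hc1
  rw [Real.mul_iSup_of_nonneg hc.le]
  congr 1 with β
  field_simp

section

variable {S : Type*} [MeasurableSpace S] {μ : Measure S} {R : S → ℝ} {C : ℝ}

lemma mul_integral_le_integral_mul {f : S → ℝ} {a : ℝ} (hf : Integrable f μ)
    (hfR : Integrable (fun s => f s * R s) μ) (hf0 : ∀ s, 0 ≤ f s) (hR : ∀ᵐ s ∂μ, a ≤ R s) :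
    a * ∫ s, f s ∂μ ≤ ∫ s, f s * R s ∂μ := by
  rw [mul_comm, ← integral_mul_const]
  exact integral_mono_ae (hf.mul_const a) hfR
    (hR.mono fun s hs => mul_le_mul_of_nonneg_left hs (hf0 s))

lemma integrable_max_zero_sub [IsFiniteMeasure μ] (hR : Integrable R μ) (β : ℝ) :
    Integrable (fun s => max 0 (β - R s)) μ :=
  (integrable_zero S ℝ μ).sup ((integrable_const β).sub hR)

lemma exists_weight_on_set [IsFiniteMeasure μ] (hRm : AEStronglyMeasurable R μ)
    (hbd : ∀ s, |R s| ≤ C) {E : Set S} (hE : MeasurableSet E) (hμE : μ E ≠ 0) {a c : ℝ}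
    (hc : 0 ≤ c) (hRE : ∀ s ∈ E, R s ≤ a) :
    ∃ D, Measurable D ∧ Integrable D μ ∧ (∀ s, 0 ≤ D s) ∧ ∫ s, D s ∂μ = c ∧
      ∫ s, D s * R s ∂μ ≤ c * a := by
  have hμE' : μ.real E ≠ 0 := (measureReal_ne_zero_iff).2 hμE
  set D : S → ℝ := fun s => c / μ.real E * E.indicator (fun _ => 1) s
  have hD0 : ∀ s, 0 ≤ D s := fun s =>
    mul_nonneg (div_nonneg hc measureReal_nonneg) (Set.indicator_nonneg (fun _ _ => zero_le_one) s)
  have hDi : Integrable D μ := ((integrable_const (1 : ℝ)).indicator hE).const_mul _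
  have hD : ∫ s, D s ∂μ = c := by
    rw [integral_const_mul, integral_indicator_const _ hE, smul_eq_mul, mul_one,
      div_mul_cancel₀ _ hμE']
  refine ⟨D, (measurable_const.indicator hE).const_mul _, hDi, hD0, hD, ?_⟩
  calc ∫ s, D s * R s ∂μ ≤ ∫ s, D s * a ∂μ := by
        refine integral_mono (hDi.mul_bdd hRm (ae_of_all _ hbd)) (hDi.mul_const a) fun s => ?_
        by_cases hs : s ∈ E
        · exact mul_le_mul_of_nonneg_left (hRE s hs) (hD0 s)
        · simp [D, hs]
    _ = c * a := by rw [integral_mul_const, hD]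

variable [IsProbabilityMeasure μ]

lemma le_integral_mul_of_tv_le (hRm : AEStronglyMeasurable R μ) (hbd : ∀ s, |R s| ≤ C)
    {Rmin c : ℝ} (hmin : ∀ᵐ s ∂μ, Rmin ≤ R s) (hc1 : c ≤ 1) {W : S → ℝ} (hWi : Integrable W μ)
    (hW0 : ∀ s, 0 ≤ W s) (hW1 : ∫ s, W s ∂μ = 1) (hWc : ∫ s, |W s - 1| / 2 ∂μ ≤ c) (β : ℝ) :
    c * Rmin + ((1 - c) * β - ∫ s, max 0 (β - R s) ∂μ) ≤ ∫ s, W s * R s ∂μ := by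
  have hRi : Integrable R μ := .of_bound hRm C (ae_of_all _ hbd)
  set m : S → ℝ := fun s => min (W s) 1
  have hm0 : ∀ s, 0 ≤ m s := fun s => le_min (hW0 s) zero_le_one
  have hm1 : ∀ s, m s ≤ 1 := fun s => min_le_right _ _
  have hmi : Integrable m μ := hWi.inf (integrable_const 1)
  have hWmi : Integrable (fun s => W s - m s) μ := hWi.sub hmi
  set t := 1 - ∫ s, m s ∂μ
  have ht : t ≤ c := by
    have habs : ∀ s, |W s - 1| / 2 = (W s + 1) / 2 - m s := fun s => by
      rcases le_total (W s) 1 with h | h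
      · rw [abs_of_nonpos (by linarith), show m s = W s from min_eq_left h]; ring
      · rw [abs_of_nonneg (by linarith), show m s = 1 from min_eq_right h]; ring
    have hW1i : Integrable (fun s => (W s + 1) / 2) μ := (hWi.add (integrable_const 1)).div_const 2
    simp_rw [habs] at hWc
    rw [integral_sub hW1i hmi, integral_div, integral_add hWi (integrable_const 1), hW1] at hWc
    simp only [integral_const, probReal_univ, smul_eq_mul, one_mul] at hWc
    linarith
  have hkept : (1 - t) * β - ∫ s, max 0 (β - R s) ∂μ ≤ ∫ s, m s * R s ∂μ := by
    have hlow : Integrable (fun s => m s * β - max 0 (β - R s)) μ :=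
      (hmi.mul_const β).sub (integrable_max_zero_sub hRi β)
    have := integral_mono hlow
      (hmi.mul_bdd hRm (ae_of_all _ hbd)) fun s => mul_sub_max_zero_sub_le_mul (hm0 s) (hm1 s)
    rwa [integral_sub (hmi.mul_const β) (integrable_max_zero_sub hRi β), integral_mul_const,
      show ∫ s, m s ∂μ = 1 - t by ring] at this
  have hmoved : Rmin * t ≤ ∫ s, (W s - m s) * R s ∂μ := by
    have := mul_integral_le_integral_mul hWmi (hWmi.mul_bdd hRm (ae_of_all _ hbd))
      (fun s => sub_nonneg.2 (min_le_left _ _)) hmin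
    rwa [integral_sub hWi hmi, hW1] at this
  have htotal : Rmin ≤ ∫ s, W s * R s ∂μ := by
    simpa [hW1] using mul_integral_le_integral_mul hWi (hWi.mul_bdd hRm (ae_of_all _ hbd)) hW0 hmin
  have hsplit : ∫ s, W s * R s ∂μ = ∫ s, m s * R s ∂μ + ∫ s, (W s - m s) * R s ∂μ := by
    rw [← integral_add (hmi.mul_bdd hRm (ae_of_all _ hbd)) (hWmi.mul_bdd hRm (ae_of_all _ hbd))]
    simp only [← add_mul, add_sub_cancel]
  have hI : 0 ≤ ∫ s, max 0 (β - R s) ∂μ := integral_nonneg fun s => le_max_left _ _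
  rcases le_total β Rmin with hβ | hβ <;> nlinarith

lemma exists_quantile_weight (hR : Measurable R) (hbd : ∀ s, |R s| ≤ C) {q η : ℝ} (hq0 : 0 < q)
    (hq1 : q ≤ 1) (hη : 0 < η) :
    ∃ β K, Measurable K ∧ (∀ s, 0 ≤ K s ∧ K s ≤ 1) ∧ ∫ s, K s ∂μ = q ∧
      ∀ s, K s * R s ≤ K s * β - max 0 (β - R s) + η := by
  set G : ℝ → ℝ := fun x => μ.real {s | R s ≤ x}
  have hG : Monotone G := fun x y hxy => measureReal_mono fun s (hs : R s ≤ x) => hs.trans hxy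
  have hlow : G (-C - 1) < q := by
    have : {s | R s ≤ -C - 1} = ∅ := Set.eq_empty_of_forall_notMem fun s (hs : R s ≤ -C - 1) => by
      linarith [neg_abs_le (R s), hbd s]
    simp [G, this, hq0]
  have hhigh : q ≤ G C := by
    have : {s | R s ≤ C} = Set.univ := Set.eq_univ_of_forall fun s => (le_abs_self _).trans (hbd s)
    simp [G, this, hq1]
  obtain ⟨β, hlt, hle⟩ := hG.exists_sub_lt_le hlow hhigh hη
  set θ := (G β - q) / (G β - G (β - η))
  have hθ0 : 0 ≤ θ := div_nonneg (by linarith) (by linarith)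
  have hθ1 : θ ≤ 1 := (div_le_one (by linarith)).2 (by linarith)
  have hmeas : ∀ x, MeasurableSet {s | R s ≤ x} := fun x => measurableSet_le hR measurable_const
  set K : S → ℝ := fun s => θ * {s | R s ≤ β - η}.indicator (fun _ => 1) s +
    (1 - θ) * {s | R s ≤ β}.indicator (fun _ => 1) s
  refine ⟨β, K, ?_, fun s => ?_, ?_, fun s => ?_⟩
  · exact ((measurable_const.indicator (hmeas _)).const_mul θ).add
      ((measurable_const.indicator (hmeas _)).const_mul (1 - θ))
  · by_cases h1 : R s ≤ β - η <;> by_cases h2 : R s ≤ β <;>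
      simp [K, Set.indicator_apply, h1, h2] <;> constructor <;> linarith
  · simp only [K]
    rw [integral_add ((integrable_const (1 : ℝ)).indicator (hmeas _) |>.const_mul θ)
      ((integrable_const (1 : ℝ)).indicator (hmeas _) |>.const_mul (1 - θ)),
      integral_const_mul, integral_const_mul, integral_indicator_const _ (hmeas _),
      integral_indicator_const _ (hmeas _)]
    simp only [smul_eq_mul, mul_one]
    change θ * G (β - η) + (1 - θ) * G β = q
    have : G β - G (β - η) ≠ 0 := by linarith
    simp only [θ]
    field_simp
    ring
  · by_cases h1 : R s ≤ β - η <;> by_cases h2 : R s ≤ β <;>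
      simp [K, Set.indicator_apply, h1, h2] <;>
      first | linarith | (constructor <;> linarith) | nlinarith

lemma integral_abs_add_sub_one_div_two_le {K D : S → ℝ} {c : ℝ} (hK : Integrable K μ)
    (hD : Integrable D μ) (hK01 : ∀ s, 0 ≤ K s ∧ K s ≤ 1) (hD0 : ∀ s, 0 ≤ D s)
    (hKi : ∫ s, K s ∂μ = 1 - c) (hDi : ∫ s, D s ∂μ = c) :
    ∫ s, |K s + D s - 1| / 2 ∂μ ≤ c := by
  have hbound : ∀ s, |K s + D s - 1| / 2 ≤ (1 - K s + D s) / 2 := fun s => by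
    have := hK01 s
    have := hD0 s
    gcongr
    rw [abs_le]; constructor <;> linarith
  have h1K : Integrable (fun s => 1 - K s) μ := (integrable_const 1).sub hK
  have hKD : Integrable (fun s => K s + D s - 1) μ := (hK.add hD).sub (integrable_const 1)
  calc ∫ s, |K s + D s - 1| / 2 ∂μ ≤ ∫ s, (1 - K s + D s) / 2 ∂μ :=
        integral_mono (hKD.abs.div_const 2) ((h1K.add hD).div_const 2) hbound
    _ = c := by
      rw [integral_div, integral_add h1K hD, integral_sub (integrable_const 1) hK, hKi, hDi]
      simp only [integral_const, probReal_univ, smul_eq_mul, one_mul]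
      ring

lemma exists_tv_weight_integral_mul_le (hR : Measurable R) (hbd : ∀ s, |R s| ≤ C) {E : Set S}
    (hE : MeasurableSet E) (hμE : μ E ≠ 0) {a c η : ℝ} (hRE : ∀ s ∈ E, R s ≤ a) (hc0 : 0 ≤ c)
    (hc1 : c < 1) (hη : 0 < η) :
    ∃ β W, Measurable W ∧ (∀ s, 0 ≤ W s) ∧ ∫ s, W s ∂μ = 1 ∧ ∫ s, |W s - 1| / 2 ∂μ ≤ c ∧
      ∫ s, W s * R s ∂μ ≤ c * a + ((1 - c) * β - ∫ s, max 0 (β - R s) ∂μ) + η := by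
  have hRm : AEStronglyMeasurable R μ := hR.aestronglyMeasurable
  have hRi : Integrable R μ := .of_bound hRm C (ae_of_all _ hbd)
  obtain ⟨β, K, hKm, hK01, hKi, hKR⟩ :=
    exists_quantile_weight (μ := μ) hR hbd (q := 1 - c) (by linarith) (by linarith) hη
  obtain ⟨D, hDm, hDint, hD0, hDi, hDR⟩ := exists_weight_on_set hRm hbd hE hμE hc0 hRE
  have hKint : Integrable K μ := .of_bound hKm.aestronglyMeasurable 1 (ae_of_all _ fun s => by
    rw [Real.norm_eq_abs, abs_le]; constructor <;> linarith [hK01 s])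
  have hKRint : Integrable (fun s => K s * R s) μ := hKint.mul_bdd hRm (ae_of_all _ hbd)
  have hDRint : Integrable (fun s => D s * R s) μ := hDint.mul_bdd hRm (ae_of_all _ hbd)
  refine ⟨β, fun s => K s + D s, hKm.add hDm, fun s => add_nonneg (hK01 s).1 (hD0 s), ?_,
    integral_abs_add_sub_one_div_two_le hKint hDint hK01 hD0 hKi hDi, ?_⟩
  · rw [integral_add hKint hDint, hKi, hDi]
    ring
  · have hKβ : Integrable (fun s => K s * β - max 0 (β - R s)) μ :=
      (hKint.mul_const β).sub (integrable_max_zero_sub hRi β)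
    have hKβη : Integrable (fun s => K s * β - max 0 (β - R s) + η) μ :=
      hKβ.add (integrable_const η)
    have hkept := integral_mono hKRint hKβη hKR
    rw [integral_add hKβ (integrable_const η), integral_sub (hKint.mul_const β)
      (integrable_max_zero_sub hRi β), integral_mul_const, hKi] at hkept
    simp only [integral_const, probReal_univ, smul_eq_mul, one_mul] at hkept
    simp only [add_mul]
    rw [integral_add hKRint hDRint]
    linarith

end

theorem stmt1 {S : Type*} [MeasurableSpace S] (μ : Measure S) [IsProbabilityMeasure μ]
    (R : S → ℝ) (hR : Measurable R) (Rmax : ℝ) (hbd : ∀ s, |R s| ≤ Rmax)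
    (Rmin : ℝ) (hmin : essInf R μ = Rmin) (c : ℝ) (hc0 : 0 < c) (hc1 : c < 1) :
    sInf {v : ℝ | ∃ W : S → ℝ, Measurable W ∧ (∀ s, 0 ≤ W s) ∧
        (∫ s, W s ∂μ) = 1 ∧ (∫ s, |W s - 1| / 2 ∂μ) ≤ c ∧ v = ∫ s, W s * R s ∂μ} =
      c * Rmin + (1 - c) * (⨆ β : ℝ, (β - (1 / (1 - c)) * ∫ s, max 0 (β - R s) ∂μ)) := by
  have hmin_ae : ∀ᵐ s ∂μ, Rmin ≤ R s :=
    hmin ▸ ae_essInf_le (isBoundedUnder_of ⟨-Rmax, fun s => (abs_le.1 (hbd s)).1⟩)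
  rw [one_sub_mul_iSup_sub_one_div_mul hc1]
  set φ : ℝ → ℝ := fun β => (1 - c) * β - ∫ s, max 0 (β - R s) ∂μ
  have hlower : ∀ W : S → ℝ, (∀ s, 0 ≤ W s) → ∫ s, W s ∂μ = 1 → ∫ s, |W s - 1| / 2 ∂μ ≤ c →
      ∀ β, c * Rmin + φ β ≤ ∫ s, W s * R s ∂μ := fun W hW0 hW1 hWc =>
    le_integral_mul_of_tv_le hR.aestronglyMeasurable hbd hmin_ae hc1.le
      (.of_integral_ne_zero (by simp [hW1])) hW0 hW1 hWc
  have hone : ∫ s, |(1 : ℝ) - 1| / 2 ∂μ ≤ c := by simp [hc0.le]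
  have hbdd : BddAbove (Set.range φ) := ⟨∫ s, 1 * R s ∂μ - c * Rmin, by
    rintro _ ⟨β, rfl⟩
    linarith [hlower (fun _ => 1) (fun _ => zero_le_one) (by simp) hone β]⟩
  refine csInf_eq_of_forall_ge_of_forall_gt_exists_lt
    ⟨_, fun _ => 1, measurable_const, fun _ => zero_le_one, by simp, hone, rfl⟩ ?_ fun w hw => ?_
  · rintro v ⟨W, -, hW0, hW1, hWc, rfl⟩
    have := ciSup_le fun β => le_sub_iff_add_le'.2 (hlower W hW0 hW1 hWc β)
    linarith
  · set ε := w - (c * Rmin + ⨆ β, φ β)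
    have hcobdd : IsCoboundedUnder (· ≥ ·) (ae μ) R :=
      isCoboundedUnder_ge_of_le _ fun s => (le_abs_self _).trans (hbd s)
    obtain ⟨β, W, hWm, hW0, hW1, hWc, hWR⟩ := exists_tv_weight_integral_mul_le hR hbd
      (measurableSet_lt hR measurable_const)
      (measure_lt_ne_zero_of_essInf_lt hcobdd (x := Rmin + ε / 2) (by linarith))
      (fun s (hs : R s < Rmin + ε / 2) => hs.le) hc0.le hc1 (half_pos (sub_pos.2 hw))
    refine ⟨_, ⟨W, hWm, hW0, hW1, hWc, rfl⟩, ?_⟩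
    have := le_ciSup hbdd β
    nlinarith
end

section
/- Let P be a linear operator on a Hilbert space H of functions with induced norm ‖·‖, and suppose there exist constants C > 0 and a sequence (ᾱ_t)_{t≥1} with ᾱ_t → 0 such that ‖P^t f − m(f)‖ ≤ C ‖f‖ ᾱ_t for all f ∈ H and t ≥ 1, where m is a linear functional with m(f) the constant function. Let Q, Q* ∈ H satisfy m(Q − Q*) = 0 (i.e. the mean-zero centering). Then there exists a constant C' depending only on C and (ᾱ_t) such that ‖Q − Q*‖ ≤ C' ‖(I − P)(Q − Q*)‖. -/
open Filter

theorem stmt5 {H : Type*} [NormedAddCommGroup H] [InnerProductSpace ℝ H] [CompleteSpace H]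
    (P : H →L[ℝ] H) (m : H →ₗ[ℝ] H) (C : ℝ) (hC : 0 < C) (α : ℕ → ℝ)
    (hα : Tendsto α atTop (nhds 0))
    (hmix : ∀ (f : H) (t : ℕ), 1 ≤ t → ‖(P ^ t) f - m f‖ ≤ C * ‖f‖ * α t) :
    ∃ C' : ℝ, 0 < C' ∧ ∀ Q Qstar : H, m (Q - Qstar) = 0 →
      ‖Q - Qstar‖ ≤ C' * ‖(Q - Qstar) - P (Q - Qstar)‖ := by
  -- choose t ≥ 1 with |α t| < 1/(2C)
  have hball : ∀ᶠ t in atTop, |α t| < 1 / (2 * C) := by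
    have := hα.eventually (Metric.ball_mem_nhds (0 : ℝ)
      (show (0:ℝ) < 1 / (2 * C) by positivity))
    filter_upwards [this] with t ht
    simpa [Real.dist_eq] using ht
  obtain ⟨t, ht1, htα⟩ := ((eventually_ge_atTop 1).and hball).exists
  set S : ℝ := ∑ i ∈ Finset.range t, ‖P‖ ^ i with hS
  have hSpos : 0 < S := by
    have : (1:ℝ) ≤ S := by
      rw [hS]
      calc (1:ℝ) = ∑ i ∈ Finset.range 1, ‖P‖ ^ i := by simp
        _ ≤ _ := Finset.sum_le_sum_of_subset_of_nonneg
            (Finset.range_subset_range.mpr ht1) (by intro i _ _; positivity)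
    linarith
  refine ⟨2 * S, by linarith, ?_⟩
  intro Q Qstar hm
  set g : H := Q - Qstar with hg
  set h : H := g - P g with hh
  -- telescoping: g - P^t g = ∑ P^i h
  have tele : g - (P ^ t) g = ∑ i ∈ Finset.range t, (P ^ i) h := by
    have : (∑ i ∈ Finset.range t, P ^ i) * (1 - P) = 1 - P ^ t := by
      have := geom_sum_mul P t
      have h2 : (∑ i ∈ Finset.range t, P ^ i) * (1 - P)
          = -((∑ i ∈ Finset.range t, P ^ i) * (P - 1)) := by
        noncomm_ring
      rw [h2, this, neg_sub]
    have := congrArg (fun A : H →L[ℝ] H => A g) this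
    simpa [ContinuousLinearMap.sum_apply, hh, ContinuousLinearMap.mul_apply,
      ContinuousLinearMap.sub_apply, ContinuousLinearMap.one_apply, map_sub] using this.symm
  have hbound1 : ‖(P ^ t) g‖ ≤ (1/2) * ‖g‖ := by
    have := hmix g t ht1
    rw [hm] at this
    have h1 : ‖(P ^ t) g‖ ≤ C * ‖g‖ * α t := by simpa using this
    have h2 : C * ‖g‖ * α t ≤ C * ‖g‖ * |α t| :=
      mul_le_mul_of_nonneg_left (le_abs_self _) (by positivity)
    have h3 : C * ‖g‖ * |α t| ≤ C * ‖g‖ * (1 / (2 * C)) :=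
      mul_le_mul_of_nonneg_left htα.le (by positivity)
    have h4 : C * ‖g‖ * (1 / (2 * C)) = (1/2) * ‖g‖ := by field_simp
    linarith
  have hmain : ‖g‖ ≤ 2 * ‖g - (P ^ t) g‖ := by
    have := norm_sub_norm_le g ((P ^ t) g)
    have h5 : ‖g‖ - (1/2) * ‖g‖ ≤ ‖g - (P ^ t) g‖ := by linarith
    linarith
  have hsum : ‖g - (P ^ t) g‖ ≤ S * ‖h‖ := by
    rw [tele, hS, Finset.sum_mul]
    refine (norm_sum_le _ _).trans (Finset.sum_le_sum fun i _ => ?_)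
    rcases Nat.eq_zero_or_pos i with hi | hi
    · simp [hi]
    calc ‖(P ^ i) h‖ ≤ ‖P ^ i‖ * ‖h‖ := (P ^ i).le_opNorm h
      _ ≤ ‖P‖ ^ i * ‖h‖ := by gcongr; exact norm_pow_le' P hi
  calc ‖g‖ ≤ 2 * ‖g - (P ^ t) g‖ := hmain
    _ ≤ 2 * (S * ‖h‖) := by linarith
    _ = 2 * S * ‖h‖ := by ring
end

section
/- Let (η*, Q*) solve the average-reward Bellman equation E[r(S_t, A_t) + Σ_{a'} π(a'|S_{t+1}) Q(S_{t+1}, a') | S_t = s, A_t = a] = Q(s,a) + η for all (s, a), and let ω^π(s,a) ≥ 0 be a weight function satisfying the stationarity property E[(1/T) Σ_t ω^π(S_t,A_t)·g(S_t,A_t)] = E_{d^π}[g] for all bounded g, with E_{d^π}[1] = 1. Then for any other pair (η, Q), the Bellman error E(s,a; η,Q) := E[r + Σ_{a'}π(a'|S_{t+1})Q(S_{t+1},a') − η − Q(s,a) | S_t=s, A_t=a] satisfies the decomposition E(·; η,Q) = (η* − η)·e^π + (I − P^π)w, where e^π is the scaled ratio with E_{d^π}[(I−P^π)f · e^π] =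 0 for all f and w = Q* − Q + (η* − η)H^π; consequently |η − η*| ≤ ‖e^π‖^{-1}·‖E(·; η, Q)‖. -/
open scoped RealInnerProductSpace

/-- Bellman error decomposition and the bound `|η − η*| ≤ ‖e^π‖⁻¹ ‖E‖`.
Here `H` is the `L²` space of state-action functions, `P` the conditional
expectation operator `P^π`, `one` the constant function 1, `eπ` the scaled ratio
(orthogonal to the range of `I − P`), and `Hπ` satisfies `1 − e^π = (I − P)H^π`.
The Bellman error of `(η, Q)` is `E = (η* − η)·1 + (I − P)(Q* − Q)`. -/
theorem stmt11 {H : Type*} [NormedAddCommGroup H] [InnerProductSpace ℝ H]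
    (P : H →ₗ[ℝ] H) (one eπ Hπ Q Qstar E : H) (η ηstar : ℝ)
    (hHπ : one - eπ = Hπ - P Hπ)
    (horth : ∀ f : H, ⟪f - P f, eπ⟫ = 0)
    (hE : E = (ηstar - η) • one + ((Qstar - Q) - P (Qstar - Q)))
    (heπ : eπ ≠ 0) :
    E = (ηstar - η) • eπ +
        ((Qstar - Q + (ηstar - η) • Hπ) - P (Qstar - Q + (ηstar - η) • Hπ)) ∧
    |η - ηstar| ≤ ‖eπ‖⁻¹ * ‖E‖ := by
  set c := ηstar - η with hc
  have hdecomp : E = c • eπ +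
      ((Qstar - Q + c • Hπ) - P (Qstar - Q + c • Hπ)) := by
    rw [hE, map_add, map_smul]
    have : c • one - c • eπ = c • Hπ - c • P Hπ := by
      rw [← smul_sub, ← smul_sub, hHπ]
    linear_combination (norm := abel) this
  refine ⟨hdecomp, ?_⟩
  have hip : ⟪E, eπ⟫ = c * ‖eπ‖ ^ 2 := by
    rw [hdecomp, inner_add_left, horth, inner_smul_left, real_inner_self_eq_norm_sq]
    simp [RCLike.conj_to_real]
  have habs : |c| * ‖eπ‖ ^ 2 ≤ ‖E‖ * ‖eπ‖ := by
    calc |c| * ‖eπ‖ ^ 2 = |⟪E, eπ⟫| := by rw [hip, abs_mul, abs_of_nonneg (sq_nonneg ‖eπ‖)]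
    _ ≤ ‖E‖ * ‖eπ‖ := abs_real_inner_le_norm E eπ
  have hne : (0:ℝ) < ‖eπ‖ := norm_pos_iff.mpr heπ
  have : |η - ηstar| = |c| := by rw [hc, abs_sub_comm]
  rw [this]
  rw [inv_mul_eq_div, le_div_iff₀ hne]
  nlinarith [sq_nonneg (‖eπ‖)]
end

section
/- With the notation and assumptions of the Bellman error decomposition (E(·;η,Q) = (η*−η)e^π + (I−P^π)w where w = Q*−Q+(η*−η)H^π and the two components are orthogonal in L²(d-data norm)), one has ‖(I − P^π)(Q − Q*)‖ ≤ (1 + ‖e^π‖^{-1})·‖E(·; η, Q)‖. -/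
open scoped RealInnerProductSpace

/-- With the Bellman error decomposition `E = (η*−η)·1 + (I−P)(Q*−Q)`,
where `1 − e^π = (I−P)H^π`, `e^π` is orthogonal to the range of `I−P`,
and `‖1‖ = 1`, one has `‖(I−P)(Q−Q*)‖ ≤ (1 + ‖e^π‖⁻¹)·‖E‖`. -/
theorem stmt12 {H : Type*} [NormedAddCommGroup H] [InnerProductSpace ℝ H]
    (P : H →ₗ[ℝ] H) (one eπ Hπ Q Qstar E : H) (η ηstar : ℝ)
    (hHπ : one - eπ = Hπ - P Hπ)
    (horth : ∀ f : H, ⟪f - P f, eπ⟫ = 0)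
    (hE : E = (ηstar - η) • one + ((Qstar - Q) - P (Qstar - Q)))
    (heπ : eπ ≠ 0) (hone : ‖one‖ = 1) :
    ‖(Q - Qstar) - P (Q - Qstar)‖ ≤ (1 + ‖eπ‖⁻¹) * ‖E‖ := by
  set δ := ηstar - η with hδ
  have hone_eq : one = eπ + (Hπ - P Hπ) := by
    rw [← hHπ]; abel
  have hinner_one : ⟪one, eπ⟫ = ‖eπ‖ ^ 2 := by
    rw [hone_eq, inner_add_left, horth Hπ, real_inner_self_eq_norm_sq]
    ring
  have hEe : ⟪E, eπ⟫ = δ * ‖eπ‖ ^ 2 := by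
    rw [hE, inner_add_left, inner_smul_left, horth, hinner_one]
    simp
  have heπ_pos : (0:ℝ) < ‖eπ‖ := norm_pos_iff.mpr heπ
  have hCS : |⟪E, eπ⟫| ≤ ‖E‖ * ‖eπ‖ := abs_real_inner_le_norm E eπ
  have hδbd : |δ| ≤ ‖E‖ * ‖eπ‖⁻¹ := by
    rw [hEe, abs_mul, abs_of_nonneg (by positivity : (0:ℝ) ≤ ‖eπ‖ ^ 2)] at hCS
    rw [← div_eq_mul_inv, le_div_iff₀ heπ_pos]
    nlinarith [hCS, heπ_pos, abs_nonneg δ]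
  have hkey : (Q - Qstar) - P (Q - Qstar) = δ • one - E := by
    rw [hE]; simp only [map_sub]
    abel
  calc ‖(Q - Qstar) - P (Q - Qstar)‖ = ‖δ • one - E‖ := by rw [hkey]
    _ ≤ ‖δ • one‖ + ‖E‖ := norm_sub_le _ _
    _ = |δ| + ‖E‖ := by rw [norm_smul, hone, Real.norm_eq_abs, mul_one]
    _ ≤ ‖E‖ * ‖eπ‖⁻¹ + ‖E‖ := by linarith
    _ = (1 + ‖eπ‖⁻¹) * ‖E‖ := by ring
end
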